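/- In a disjunctive logic, every base change operator satisfying (G1)–(G6) is total preorder representable. -/
import Mathlib


namespace BeliefRev

variable {L Ω : Type*}

/-- The models of a belief base (a finite set of sentences). -/
def Mod (sat : Ω → L → Prop) (K : Finset L) : Set Ω :=
  {ω | ∀ φ ∈ K, sat ω φ}

/-- `min(S, r)`: the elements of `S` that are `r`-below every element of `S`. -/
def minSet (S : Set Ω) (r : Ω → Ω → Prop) : Set Ω :=
  {ω ∈ S | ∀ ω' ∈ S, r ω ω'}

/-- A binary relation is total. -/
def TotalRel (r : Ω → Ω → Prop) : Prop :=
  ∀ ω₁ ω₂, r ω₁ ω₂ ∨ r ω₂ ω₁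

/-- The strict part of a relation: `ω₁ ≺ ω₂` iff `ω₁ ⪯ ω₂` and not `ω₂ ⪯ ω₁`. -/
def StrictRel (r : Ω → Ω → Prop) (ω₁ ω₂ : Ω) : Prop :=
  r ω₁ ω₂ ∧ ¬ r ω₂ ω₁

/-- Postulate (G1). -/
def G1 (sat : Ω → L → Prop) (op : Finset L → Finset L → Finset L) : Prop :=
  ∀ K Γ, Mod sat (op K Γ) ⊆ Mod sat Γ

/-- Postulate (G2). -/
def G2 [DecidableEq L] (sat : Ω → L → Prop) (op : Finset L → Finset L → Finset L) : Prop :=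
  ∀ K Γ, (Mod sat (K ∪ Γ)).Nonempty → Mod sat (op K Γ) = Mod sat (K ∪ Γ)

/-- Postulate (G3). -/
def G3 (sat : Ω → L → Prop) (op : Finset L → Finset L → Finset L) : Prop :=
  ∀ K Γ, (Mod sat Γ).Nonempty → (Mod sat (op K Γ)).Nonempty

/-- Postulate (G4). -/
def G4 (sat : Ω → L → Prop) (op : Finset L → Finset L → Finset L) : Prop :=
  ∀ K₁ K₂ Γ₁ Γ₂, Mod sat K₁ = Mod sat K₂ → Mod sat Γ₁ = Mod sat Γ₂ →
    Mod sat (op K₁ Γ₁) = Mod sat (op K₂ Γ₂)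

/-- Postulate (G5). -/
def G5 [DecidableEq L] (sat : Ω → L → Prop) (op : Finset L → Finset L → Finset L) : Prop :=
  ∀ K Γ₁ Γ₂, Mod sat (op K Γ₁) ∩ Mod sat Γ₂ ⊆ Mod sat (op K (Γ₁ ∪ Γ₂))

/-- Postulate (G6). -/
def G6 [DecidableEq L] (sat : Ω → L → Prop) (op : Finset L → Finset L → Finset L) : Prop :=
  ∀ K Γ₁ Γ₂, (Mod sat (op K Γ₁) ∩ Mod sat Γ₂).Nonempty →
    Mod sat (op K (Γ₁ ∪ Γ₂)) ⊆ Mod sat (op K Γ₁) ∩ Mod sat Γ₂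

/-- The conjunction of postulates (G1)–(G6). -/
def AGM [DecidableEq L] (sat : Ω → L → Prop) (op : Finset L → Finset L → Finset L) : Prop :=
  G1 sat op ∧ G2 sat op ∧ G3 sat op ∧ G4 sat op ∧ G5 sat op ∧ G6 sat op

/-- The canonical relation `⪯ᵒ_K` obtained from a base change operator. -/
def canonicalRel (sat : Ω → L → Prop) (op : Finset L → Finset L → Finset L)
    (K : Finset L) (ω₁ ω₂ : Ω) : Prop :=
  ∀ Γ : Finset L, ω₁ ∈ Mod sat Γ → ω₂ ∈ Mod sat Γ →
    (ω₁ ∈ Mod sat (op K Γ) ∨ ω₂ ∉ Mod sat (op K Γ))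

/-- A relation is min-retractive. -/
def MinRetractive (sat : Ω → L → Prop) (r : Ω → Ω → Prop) : Prop :=
  ∀ (Γ : Finset L) (ω ω' : Ω), ω ∈ Mod sat Γ → ω' ∈ Mod sat Γ →
    r ω' ω → ω ∈ minSet (Mod sat Γ) r → ω' ∈ minSet (Mod sat Γ) r

/-- A relation is min-complete. -/
def MinComplete (sat : Ω → L → Prop) (r : Ω → Ω → Prop) : Prop :=
  ∀ Γ : Finset L, (Mod sat Γ).Nonempty → (minSet (Mod sat Γ) r).Nonempty

/-- A relation is min-friendly: min-retractive and min-complete. -/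
def MinFriendly (sat : Ω → L → Prop) (r : Ω → Ω → Prop) : Prop :=
  MinRetractive sat r ∧ MinComplete sat r

/-- A relation is min-expressible. -/
def MinExpressible (sat : Ω → L → Prop) (r : Ω → Ω → Prop) : Prop :=
  ∀ Γ : Finset L, ∃ B : Finset L, Mod sat B = minSet (Mod sat Γ) r

/-- An assignment maps each belief base to a *total* relation on interpretations. -/
def IsAssignment (assign : Finset L → Ω → Ω → Prop) : Prop :=
  ∀ K : Finset L, TotalRel (assign K)

/-- Faithfulness of an assignment: conditions (F1), (F2) and (F3). -/
def Faithful (sat : Ω → L → Prop) (assign : Finset L → Ω → Ω → Prop) : Prop :=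
  (∀ (K : Finset L) (ω ω' : Ω), ω ∈ Mod sat K → ω' ∈ Mod sat K →
      ¬ StrictRel (assign K) ω ω') ∧
  (∀ (K : Finset L) (ω ω' : Ω), ω ∈ Mod sat K → ω' ∉ Mod sat K →
      StrictRel (assign K) ω ω') ∧
  (∀ K K' : Finset L, Mod sat K = Mod sat K' → assign K = assign K')

/-- Compatibility of a base change operator with an assignment. -/
def Compatible (sat : Ω → L → Prop) (op : Finset L → Finset L → Finset L)
    (assign : Finset L → Ω → Ω → Prop) : Prop :=
  ∀ K Γ : Finset L, Mod sat (op K Γ) = minSet (Mod sat Γ) (assign K)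

/-- Total preorder representability: there is a faithful assignment compatible with `op`
whose relations are all min-complete and transitive (hence total preorders). -/
def TotalPreorderRepresentable (sat : Ω → L → Prop)
    (op : Finset L → Finset L → Finset L) : Prop :=
  ∃ assign : Finset L → Ω → Ω → Prop,
    IsAssignment assign ∧ Faithful sat assign ∧
    (∀ K : Finset L, MinComplete sat (assign K)) ∧
    (∀ K : Finset L, Transitive (assign K)) ∧
    Compatible sat op assign

/-- A pair of interpretations is detached from `op` in `K`. -/
def Detached (sat : Ω → L → Prop) (op : Finset L → Finset L → Finset L)
    (K : Finset L) (ω ω' : Ω) : Prop :=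
  ∀ Γ : Finset L, ω ∉ Mod sat (op K Γ) ∧ ω' ∉ Mod sat (op K Γ)

/-- Three belief bases form a critical loop for the logic. -/
def CriticalLoop [DecidableEq L] (sat : Ω → L → Prop) (Γ₀ Γ₁ Γ₂ : Finset L) : Prop :=
  ∃ K Γ'₀ Γ'₁ Γ'₂ : Finset L,
    (Mod sat (K ∪ Γ₀) = ∅ ∧ Mod sat (K ∪ Γ₁) = ∅ ∧ Mod sat (K ∪ Γ₂) = ∅) ∧
    ((Mod sat Γ'₀).Nonempty ∧ Mod sat Γ'₀ ⊆ (Mod sat Γ₀ ∩ Mod sat Γ₁) \ Mod sat Γ₂) ∧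
    ((Mod sat Γ'₁).Nonempty ∧ Mod sat Γ'₁ ⊆ (Mod sat Γ₁ ∩ Mod sat Γ₂) \ Mod sat Γ₀) ∧
    ((Mod sat Γ'₂).Nonempty ∧ Mod sat Γ'₂ ⊆ (Mod sat Γ₂ ∩ Mod sat Γ₀) \ Mod sat Γ₁) ∧
    (∀ Γ : Finset L, (Mod sat (Γ'₀ ∪ Γ)).Nonempty → (Mod sat (Γ'₁ ∪ Γ)).Nonempty →
      (Mod sat (Γ'₂ ∪ Γ)).Nonempty →
      ∃ Γ' : Finset L, (Mod sat Γ').Nonempty ∧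
        Mod sat Γ' ⊆ Mod sat Γ \ (Mod sat Γ₀ ∪ Mod sat Γ₁ ∪ Mod sat Γ₂))

/-- The logic admits (exhibits) a critical loop. -/
def AdmitsCriticalLoop [DecidableEq L] (sat : Ω → L → Prop) : Prop :=
  ∃ Γ₀ Γ₁ Γ₂ : Finset L, CriticalLoop sat Γ₀ Γ₁ Γ₂

/-- A logic is disjunctive: any two bases have a base acting as their disjunction. -/
def Disjunctive (sat : Ω → L → Prop) : Prop :=
  ∀ Γ₁ Γ₂ : Finset L, ∃ Δ : Finset L, Mod sat Δ = Mod sat Γ₁ ∪ Mod sat Γ₂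
section AuxLemmas

variable {L' Ω' : Type*} [DecidableEq L'] (sat : Ω' → L' → Prop)
  (op : Finset L' → Finset L' → Finset L')

lemma mem_Mod_empty (ω : Ω') : ω ∈ Mod sat (∅ : Finset L') :=
  fun φ hφ => absurd hφ (Finset.notMem_empty φ)

lemma Mod_union' (Γ₁ Γ₂ : Finset L') :
    Mod sat (Γ₁ ∪ Γ₂) = Mod sat Γ₁ ∩ Mod sat Γ₂ := by
  ext ω
  simp only [Mod, Set.mem_setOf_eq, Set.mem_inter_iff, Finset.mem_union, or_imp,
    forall_and]

lemma inter_eq_aux (h5 : G5 sat op) (h6 : G6 sat op) (K Γ₁ Γ₂ : Finset L')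
    (hne : (Mod sat (op K Γ₁) ∩ Mod sat Γ₂).Nonempty) :
    Mod sat (op K (Γ₁ ∪ Γ₂)) = Mod sat (op K Γ₁) ∩ Mod sat Γ₂ :=
  Set.Subset.antisymm (h6 K Γ₁ Γ₂ hne) (h5 K Γ₁ Γ₂)

/-- Revealed preference implies the canonical relation. -/
lemma mem_op_canonical (h5 : G5 sat op) (h6 : G6 sat op) (K Γ : Finset L')
    {ω ω' : Ω'} (hω : ω ∈ Mod sat (op K Γ)) (hω' : ω' ∈ Mod sat Γ) :
    canonicalRel sat op K ω ω' := by
  intro Γ' h1 h2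
  by_cases hc : ω' ∈ Mod sat (op K Γ')
  · left
    have hA : ω ∈ Mod sat (op K (Γ ∪ Γ')) := by
      apply h5 K Γ Γ'
      rw [Set.mem_inter_iff]
      exact ⟨hω, h1⟩
    have hB := h6 K Γ' Γ ⟨ω', Set.mem_inter hc hω'⟩
    have hcomm : Γ' ∪ Γ = Γ ∪ Γ' := Finset.union_comm _ _
    rw [hcomm] at hB
    exact (hB hA).1
  · exact Or.inr hc

lemma canonical_total (h5 : G5 sat op) (h6 : G6 sat op) (K : Finset L') :
    TotalRel (canonicalRel sat op K) := by
  intro ω₁ ω₂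
  by_contra hcon
  push_neg at hcon
  obtain ⟨hn1, hn2⟩ := hcon
  unfold canonicalRel at hn1 hn2
  push_neg at hn1 hn2
  obtain ⟨Γ, hm1, hm2, hno1, hy2⟩ := hn1
  obtain ⟨Γ', hm2', hm1', hno2, hy1⟩ := hn2
  have hr : canonicalRel sat op K ω₁ ω₂ := mem_op_canonical sat op h5 h6 K Γ' hy1 hm2'
  rcases hr Γ hm1 hm2 with hh | hh
  · exact hno1 hh
  · exact hh hy2

/-- Transitivity through an "active" middle element. -/
lemma canonical_trans_mid (hd : Disjunctive sat) (h1 : G1 sat op) (h3 : G3 sat op)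
    (h4 : G4 sat op) (h5 : G5 sat op) (h6 : G6 sat op) (K B : Finset L')
    {ω₁ ω₂ ω₃ : Ω'} (hB : ω₂ ∈ Mod sat (op K B))
    (h12 : canonicalRel sat op K ω₁ ω₂) (h23 : canonicalRel sat op K ω₂ ω₃) :
    canonicalRel sat op K ω₁ ω₃ := by
  intro Γ hm1 hm3
  by_cases h3f : ω₃ ∈ Mod sat (op K Γ)
  swap
  · exact Or.inr h3f
  left
  by_cases hm2 : ω₂ ∈ Mod sat Γ
  · have h2f : ω₂ ∈ Mod sat (op K Γ) :=
      (h23 Γ hm2 hm3).resolve_right (not_not_intro h3f)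
    exact (h12 Γ hm1 hm2).resolve_right (not_not_intro h2f)
  · obtain ⟨Δ, hΔ⟩ := hd Γ B
    have hm1Δ : ω₁ ∈ Mod sat Δ := by rw [hΔ]; exact Or.inl hm1
    have hm2Δ : ω₂ ∈ Mod sat Δ := by rw [hΔ]; exact Or.inr (h1 K B hB)
    have hm3Δ : ω₃ ∈ Mod sat Δ := by rw [hΔ]; exact Or.inl hm3
    by_cases hc : (Mod sat (op K Δ) ∩ Mod sat Γ).Nonempty
    · have heq : Mod sat (op K (Δ ∪ Γ)) = Mod sat (op K Δ) ∩ Mod sat Γ :=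
        inter_eq_aux sat op h5 h6 K Δ Γ hc
      have hMG : Mod sat (Δ ∪ Γ) = Mod sat Γ := by
        rw [Mod_union' sat, hΔ]
        exact Set.union_inter_cancel_left
      have hG : Mod sat (op K (Δ ∪ Γ)) = Mod sat (op K Γ) := h4 K K _ Γ rfl hMG
      have hkey : Mod sat (op K Γ) = Mod sat (op K Δ) ∩ Mod sat Γ := by
        rw [← hG, heq]
      have h3Δ : ω₃ ∈ Mod sat (op K Δ) := by
        have := hkey ▸ h3f
        exact this.1
      have h2Δ : ω₂ ∈ Mod sat (op K Δ) :=
        (h23 Δ hm2Δ hm3Δ).resolve_right (not_not_intro h3Δ)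
      have h1Δ : ω₁ ∈ Mod sat (op K Δ) :=
        (h12 Δ hm1Δ hm2Δ).resolve_right (not_not_intro h2Δ)
      rw [hkey]
      exact ⟨h1Δ, hm1⟩
    · exfalso
      have hfne : (Mod sat (op K Δ)).Nonempty := h3 K Δ ⟨ω₃, hm3Δ⟩
      obtain ⟨η, hη⟩ := hfne
      have hηΔ : η ∈ Mod sat Δ := h1 K Δ hη
      have hηB : η ∈ Mod sat B := by
        rw [hΔ] at hηΔ
        rcases hηΔ with hh | hh
        · exact absurd ⟨η, hη, hh⟩ hc
        · exact hh
      have hne : (Mod sat (op K Δ) ∩ Mod sat B).Nonempty := ⟨η, hη, hηB⟩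
      have heq : Mod sat (op K (Δ ∪ B)) = Mod sat (op K Δ) ∩ Mod sat B :=
        inter_eq_aux sat op h5 h6 K Δ B hne
      have hMG : Mod sat (Δ ∪ B) = Mod sat B := by
        rw [Mod_union' sat, hΔ]
        exact Set.union_inter_cancel_right
      have hG : Mod sat (op K (Δ ∪ B)) = Mod sat (op K B) := h4 K K _ B rfl hMG
      have hkey : Mod sat (op K B) = Mod sat (op K Δ) ∩ Mod sat B := by
        rw [← hG, heq]
      have h2Δ : ω₂ ∈ Mod sat (op K Δ) := (hkey ▸ hB).1
      have h1Δ : ω₁ ∈ Mod sat (op K Δ) :=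
        (h12 Δ hm1Δ hm2Δ).resolve_right (not_not_intro h2Δ)
      exact hc ⟨ω₁, h1Δ, hm1⟩

end AuxLemmas

/-- In a disjunctive logic, every base change operator satisfying
(G1)–(G6) is total preorder representable. -/
theorem disjunctive_representable {L Ω : Type*} [DecidableEq L]
    (sat : Ω → L → Prop) (hd : Disjunctive sat)
    (op : Finset L → Finset L → Finset L) (h : AGM sat op) :
    TotalPreorderRepresentable sat op := by
  classical
  obtain ⟨hg1, hg2, hg3, hg4, hg5, hg6⟩ := h
  -- the assignment: detached elements on top, canonical relation among active ones
  set A : Finset L → Ω → Ω → Prop := fun K ω ω' =>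
    (∀ Γ, ω' ∉ Mod sat (op K Γ)) ∨
    ((∃ Γ, ω ∈ Mod sat (op K Γ)) ∧ (∃ Γ, ω' ∈ Mod sat (op K Γ)) ∧
      canonicalRel sat op K ω ω') with hA
  have compat : ∀ K Γ, Mod sat (op K Γ) = minSet (Mod sat Γ) (A K) := by
    intro K Γ
    ext ω
    constructor
    · intro hω
      have hmΓ : ω ∈ Mod sat Γ := hg1 K Γ hω
      refine ⟨hmΓ, fun ω' hω' => ?_⟩
      by_cases hD : ∀ Γ', ω' ∉ Mod sat (op K Γ')
      · exact Or.inl hD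
      · push_neg at hD
        exact Or.inr ⟨⟨Γ, hω⟩, hD, mem_op_canonical sat op hg5 hg6 K Γ hω hω'⟩
    · rintro ⟨hmΓ, hmin⟩
      obtain ⟨ω', hω'⟩ := hg3 K Γ ⟨ω, hmΓ⟩
      rcases hmin ω' (hg1 K Γ hω') with hD | ⟨_, _, hr⟩
      · exact absurd hω' (hD Γ)
      · exact (hr Γ hmΓ (hg1 K Γ hω')).resolve_right (not_not_intro hω')
  have hKempty : ∀ (K : Finset L) (ω : Ω), ω ∈ Mod sat K →
      Mod sat (op K ∅) = Mod sat K := by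
    intro K ω hω
    have hne : (Mod sat (K ∪ ∅)).Nonempty := by
      rw [Finset.union_empty]; exact ⟨ω, hω⟩
    rw [hg2 K ∅ hne, Finset.union_empty]
  refine ⟨A, ?_, ⟨?_, ?_, ?_⟩, ?_, ?_, compat⟩
  · -- totality
    intro K ω₁ ω₂
    by_cases hD2 : ∀ Γ, ω₂ ∉ Mod sat (op K Γ)
    · exact Or.inl (Or.inl hD2)
    · by_cases hD1 : ∀ Γ, ω₁ ∉ Mod sat (op K Γ)
      · exact Or.inr (Or.inl hD1)
      · push_neg at hD1 hD2
        rcases canonical_total sat op hg5 hg6 K ω₁ ω₂ with hr | hr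
        · exact Or.inl (Or.inr ⟨hD1, hD2, hr⟩)
        · exact Or.inr (Or.inr ⟨hD2, hD1, hr⟩)
  · -- (F1)
    intro K ω ω' hω hω' hstrict
    apply hstrict.2
    have he := hKempty K ω hω
    have hω'e : ω' ∈ Mod sat (op K ∅) := by rw [he]; exact hω'
    have hωe : ω ∈ Mod sat (op K ∅) := by rw [he]; exact hω
    exact Or.inr ⟨⟨∅, hω'e⟩, ⟨∅, hωe⟩,
      mem_op_canonical sat op hg5 hg6 K ∅ hω'e (mem_Mod_empty sat ω)⟩
  · -- (F2)
    intro K ω ω' hω hω'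
    have he := hKempty K ω hω
    have hωe : ω ∈ Mod sat (op K ∅) := by rw [he]; exact hω
    have hω'ne : ω' ∉ Mod sat (op K ∅) := by rw [he]; exact hω'
    constructor
    · by_cases hD' : ∀ Γ, ω' ∉ Mod sat (op K Γ)
      · exact Or.inl hD'
      · push_neg at hD'
        exact Or.inr ⟨⟨∅, hωe⟩, hD',
          mem_op_canonical sat op hg5 hg6 K ∅ hωe (mem_Mod_empty sat ω')⟩
    · rintro (hD | ⟨_, _, hr⟩)
      · exact hD ∅ hωe
      · rcases hr ∅ (mem_Mod_empty sat ω') (mem_Mod_empty sat ω) with hh | hh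
        · exact hω'ne hh
        · exact hh hωe
  · -- (F3)
    intro K K' hKK'
    have hf : ∀ Γ, Mod sat (op K Γ) = Mod sat (op K' Γ) :=
      fun Γ => hg4 K K' Γ Γ hKK' rfl
    funext ω ω'
    simp only [hA, canonicalRel, hf]
  · -- min-completeness
    intro K Γ hne
    rw [← compat K Γ]
    exact hg3 K Γ hne
  · -- transitivity
    intro K a b c hab hbc
    rcases hbc with hDc | ⟨hActb, hActc, rbc⟩
    · exact Or.inl hDc
    · rcases hab with hDb | ⟨hActa, _, rab⟩
      · obtain ⟨Γb, hb⟩ := hActb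
        exact absurd hb (hDb Γb)
      · obtain ⟨B, hB⟩ := hActb
        exact Or.inr ⟨hActa, hActc,
          canonical_trans_mid sat op hd hg1 hg3 hg4 hg5 hg6 K B hB rab rbc⟩

end BeliefRev
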